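/- Let x₁, …, x_N be pairwise distinct points in ℝ^d and let ε > 0. Then the N×N matrix A with entries A_{ij} = exp(−ε²‖x_i − x_j‖²) is symmetric positive definite; in particular, A is invertible, so the Gaussian RBF interpolation problem with distinct nodes has a unique solution. -/

import Mathlib

/-!
Expanding `‖a - b‖² = ‖a‖² - 2⟪a, b⟫ + ‖b‖²` factors the Gaussian matrix as `D K D`, with `D` a
positive diagonal matrix and `K i j = exp ⟪z i, z j⟫` for the rescaled nodes `z = √2 ε x`, so it
suffices that `K` is positive definite. Expanding the exponential, `wᵀ K w` is the series
`∑ₙ ‖∑ᵢ wᵢ zᵢ^⊗n‖² / n!` of nonnegative terms. If it vanishes, every tensor `∑ᵢ wᵢ zᵢ^⊗n`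
vanishes, hence so does `∑ᵢ wᵢ ⟪zᵢ, y⟫ⁿ` for all `y` and `n`, and therefore
`∑ᵢ wᵢ exp ⟪zᵢ, y⟫ = 0` for all `y`. But the maps `y ↦ exp ⟪zᵢ, y⟫` are distinct characters of
`(ℝ^d, +)`, hence linearly independent (Dedekind–Artin), so `w = 0`.
-/

open Finset Matrix
open scoped RealInnerProductSpace Nat

noncomputable section

namespace GaussianRBF

theorem hasSum_sum_mul_exp {κ : Type*} [Fintype κ] (c v : κ → ℝ) :
    HasSum (fun n => ∑ i, c i * (v i ^ n / n !)) (∑ i, c i * Real.exp (v i)) :=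
  hasSum_sum fun i _ => by
    rw [Real.exp_eq_exp_ℝ]
    exact (NormedSpace.expSeries_div_hasSum_exp (v i)).mul_left (c i)

section InnerProductSpace

variable {E : Type*} [NormedAddCommGroup E] [InnerProductSpace ℝ E]

def expInnerChar (a : E) : Multiplicative E →* ℝ where
  toFun y := Real.exp ⟪a, y.toAdd⟫
  map_one' := by simp
  map_mul' y y' := by simp [inner_add_right, Real.exp_add]

theorem expInnerChar_injective : Function.Injective (expInnerChar (E := E)) := fun _ _ hab =>
  ext_inner_right ℝ fun y => Real.exp_injective (DFunLike.congr_fun hab (Multiplicative.ofAdd y))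

theorem linearIndependent_exp_inner {κ : Type*} {z : κ → E} (hz : Function.Injective z) :
    LinearIndependent ℝ fun i (y : E) => Real.exp ⟪z i, y⟫ :=
  (linearIndependent_monoidHom (Multiplicative E) ℝ).comp (expInnerChar ∘ z)
    (expInnerChar_injective.comp hz)

def gaussianMatrix {κ : Type*} (c : ℝ) (x : κ → E) : Matrix κ κ ℝ :=
  Matrix.of fun i j => Real.exp (-(c ^ 2) * ‖x i - x j‖ ^ 2)

def expKernel {κ : Type*} (z : κ → E) : Matrix κ κ ℝ :=
  Matrix.of fun i j => Real.exp ⟪z i, z j⟫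

theorem exp_neg_mul_norm_sub_sq (c : ℝ) (a b : E) :
    Real.exp (-(c ^ 2) * ‖a - b‖ ^ 2) =
      Real.exp (-(c ^ 2) * ‖a‖ ^ 2) * Real.exp ⟪(√2 * c) • a, (√2 * c) • b⟫ *
        Real.exp (-(c ^ 2) * ‖b‖ ^ 2) := by
  have hsqrt : √2 ^ 2 = 2 := Real.sq_sqrt zero_le_two
  rw [← Real.exp_add, ← Real.exp_add, norm_sub_sq_real, real_inner_smul_left,
    real_inner_smul_right]
  congr 1
  linear_combination -(c ^ 2 * ⟪a, b⟫) * hsqrt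

theorem gaussianMatrix_eq_diagonal_mul_expKernel_mul_diagonal {κ : Type*} [Fintype κ]
    [DecidableEq κ] (c : ℝ) (x : κ → E) :
    gaussianMatrix c x =
      diagonal (fun i => Real.exp (-(c ^ 2) * ‖x i‖ ^ 2)) * expKernel (fun i => (√2 * c) • x i) *
        diagonal (fun i => Real.exp (-(c ^ 2) * ‖x i‖ ^ 2)) := by
  ext i j
  simp only [gaussianMatrix, expKernel, mul_diagonal, diagonal_mul, of_apply]
  exact exp_neg_mul_norm_sub_sq c (x i) (x j)

end InnerProductSpace

section Coordinates

variable {ι κ : Type*} [Fintype ι] [Fintype κ]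

/-- The coordinate `α` of the tensor `∑ i, w i • (z i) ^ ⊗ n`. -/
def tensorPowSum (w : κ → ℝ) (z : κ → EuclideanSpace ℝ ι) {n : ℕ} (α : Fin n → ι) : ℝ :=
  ∑ i, w i * ∏ t, z i (α t)

theorem inner_pow_eq_sum_prod (a y : EuclideanSpace ℝ ι) (n : ℕ) :
    ⟪a, y⟫ ^ n = ∑ α : Fin n → ι, (∏ t, a (α t)) * ∏ t, y (α t) := by
  rw [real_inner_comm]
  simp only [PiLp.inner_apply, RCLike.inner_apply, conj_trivial, Fintype.sum_pow,
    ← prod_mul_distrib]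

theorem sum_mul_inner_pow (w : κ → ℝ) (z : κ → EuclideanSpace ℝ ι) (y : EuclideanSpace ℝ ι)
    (n : ℕ) : ∑ i, w i * ⟪z i, y⟫ ^ n = ∑ α : Fin n → ι, tensorPowSum w z α * ∏ t, y (α t) := by
  simp only [inner_pow_eq_sum_prod, tensorPowSum, mul_sum, sum_mul]
  rw [sum_comm]
  simp only [mul_assoc]

theorem sum_sum_mul_inner_pow (w : κ → ℝ) (z : κ → EuclideanSpace ℝ ι) (n : ℕ) :
    ∑ i, ∑ j, w i * w j * ⟪z i, z j⟫ ^ n = ∑ α : Fin n → ι, tensorPowSum w z α ^ 2 := by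
  calc ∑ i, ∑ j, w i * w j * ⟪z i, z j⟫ ^ n
      = ∑ j, w j * ∑ i, w i * ⟪z i, z j⟫ ^ n := by
        rw [sum_comm]
        exact sum_congr rfl fun j _ => by rw [mul_sum]; exact sum_congr rfl fun i _ => by ring
    _ = ∑ α : Fin n → ι, tensorPowSum w z α * ∑ j, w j * ∏ t, z j (α t) := by
        simp only [sum_mul_inner_pow, mul_sum, mul_left_comm (w _)]
        exact sum_comm
    _ = ∑ α : Fin n → ι, tensorPowSum w z α ^ 2 := by simp only [tensorPowSum, sq]

theorem hasSum_quadForm_expKernel (w : κ → ℝ) (z : κ → EuclideanSpace ℝ ι) :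
    HasSum (fun n => (∑ α : Fin n → ι, tensorPowSum w z α ^ 2) / n !)
      (∑ i, ∑ j, w i * w j * Real.exp ⟪z i, z j⟫) := by
  have := hasSum_sum_mul_exp (fun p : κ × κ => w p.1 * w p.2) fun p => ⟪z p.1, z p.2⟫
  simp only [Fintype.sum_prod_type] at this
  convert this using 2 with n
  simp only [← sum_sum_mul_inner_pow, sum_div, mul_div_assoc]

theorem sum_mul_exp_inner_eq_zero {w : κ → ℝ} {z : κ → EuclideanSpace ℝ ι}
    (h : ∀ n (α : Fin n → ι), tensorPowSum w z α = 0) (y : EuclideanSpace ℝ ι) :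
    ∑ i, w i * Real.exp ⟪z i, y⟫ = 0 := by
  refine (hasSum_sum_mul_exp w fun i => ⟪z i, y⟫).unique ?_
  convert hasSum_zero with n
  simp only [← mul_div_assoc, ← sum_div, sum_mul_inner_pow, h, zero_mul, sum_const_zero,
    zero_div]

theorem quadForm_expKernel_pos {w : κ → ℝ} {z : κ → EuclideanSpace ℝ ι}
    (hz : Function.Injective z) (hw : w ≠ 0) :
    0 < ∑ i, ∑ j, w i * w j * Real.exp ⟪z i, z j⟫ := by
  have hQ := hasSum_quadForm_expKernel w z
  have hnonneg : ∀ n, 0 ≤ (∑ α : Fin n → ι, tensorPowSum w z α ^ 2) / n ! := fun n => by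
    positivity
  refine (hQ.nonneg hnonneg).lt_of_ne fun hzero => hw ?_
  rw [← hzero, hasSum_zero_iff_of_nonneg hnonneg] at hQ
  have hT : ∀ n (α : Fin n → ι), tensorPowSum w z α = 0 := fun n α => by
    have := congrFun hQ n
    simp only [Pi.zero_apply, div_eq_zero_iff, Nat.cast_eq_zero, Nat.factorial_ne_zero,
      or_false] at this
    simpa using (sum_eq_zero_iff_of_nonneg fun _ _ => sq_nonneg _).mp this α (mem_univ α)
  funext i
  refine Fintype.linearIndependent_iff.mp (linearIndependent_exp_inner hz) w ?_ i
  funext y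
  simpa [Finset.sum_apply] using sum_mul_exp_inner_eq_zero hT y

theorem posDef_expKernel {z : κ → EuclideanSpace ℝ ι} (hz : Function.Injective z) :
    (expKernel z).PosDef := by
  refine .of_dotProduct_mulVec_pos (IsHermitian.ext fun i j => by simp [expKernel, real_inner_comm])
    fun w hw => ?_
  have hquad : star w ⬝ᵥ expKernel z *ᵥ w = ∑ i, ∑ j, w i * w j * Real.exp ⟪z i, z j⟫ := by
    simp only [dotProduct, mulVec, expKernel, of_apply, star_trivial, mul_sum,
      mul_comm (Real.exp _) (w _), mul_assoc]
  exact hquad ▸ quadForm_expKernel_pos hz hw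

theorem posDef_gaussianMatrix [DecidableEq κ] {x : κ → EuclideanSpace ℝ ι}
    (hx : Function.Injective x) {c : ℝ} (hc : c ≠ 0) : (gaussianMatrix c x).PosDef := by
  have hK : (expKernel fun i => (√2 * c) • x i).PosDef :=
    posDef_expKernel ((smul_right_injective _ (by positivity)).comp hx)
  have hD : IsUnit (diagonal fun i => Real.exp (-(c ^ 2) * ‖x i‖ ^ 2)) :=
    isUnit_diagonal.mpr (Pi.isUnit_iff.mpr fun i => (Real.exp_pos _).ne'.isUnit)
  have := hK.conjTranspose_mul_mul_same (mulVec_injective_of_isUnit hD)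
  rwa [diagonal_conjTranspose, star_trivial,
    ← gaussianMatrix_eq_diagonal_mul_expKernel_mul_diagonal] at this

end Coordinates

end GaussianRBF

end

open GaussianRBF

/-- For pairwise distinct nodes `x₁, …, x_N ∈ ℝ^d` and any shape parameter `ε > 0`, the
Gaussian RBF interpolation matrix `A_{ij} = exp(-ε²‖xᵢ - xⱼ‖²)` is symmetric positive
definite; in particular it is invertible. -/
theorem gaussian_matrix_posDef (d N : ℕ) (x : Fin N → EuclideanSpace ℝ (Fin d))
    (hx : Function.Injective x) (ε : ℝ) (hε : 0 < ε) :
    (Matrix.of fun i j : Fin N => Real.exp (-(ε ^ 2) * ‖x i - x j‖ ^ 2)).IsSymm ∧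
    (Matrix.of fun i j : Fin N => Real.exp (-(ε ^ 2) * ‖x i - x j‖ ^ 2)).PosDef ∧
    IsUnit (Matrix.of fun i j : Fin N => Real.exp (-(ε ^ 2) * ‖x i - x j‖ ^ 2)) := by
  have hA : (gaussianMatrix ε x).PosDef := posDef_gaussianMatrix hx hε.ne'
  exact ⟨isHermitian_iff_isSymm.mp hA.isHermitian, hA, hA.isUnit⟩
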